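/- arXiv:0907.1499 — 2 statements merged into one kernel-verified Lean document; each statement's English description precedes it below -/
import Mathlib

section
/- Let $G$ be a group, $N : G \to \mathbb{R}$ a subadditive function ($N(gh) \le N(g) + N(h)$), $S \le G$ a subgroup, and $r : G \to \mathbb{R}$ a homogeneous quasimorphism with defect $R$ ($|r(fg) - r(f) - r(g)| \le R$ for all $f, g$, and $r(g^m) = m \cdot r(g)$ for all $g \in G$, $m \in \mathbb{Z}$) such that $r$ vanishes on $S$ and $|r(g)| \le L \cdot N(g)$ for all $g \in G$, where $L > 0$. Then for every $\varphi \in G$, every $n \in \mathbb{N}$, and all $s, t \in S$: $N(s \varphi^n t) \ge \frac{n \cdot |r(\varphi)| - 2R}{L}$. -/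
/-- Quantitative lower bound: for a homogeneous quasimorphism vanishing on a subgroup `S`
and Lipschitz with respect to a subadditive `N`, the value of `N` on `s * φ^n * t` grows
at least linearly in `n`. -/
theorem subadditive_lower_bound_on_powers
    {G : Type*} [Group G] (N r : G → ℝ) (S : Subgroup G) (R L : ℝ)
    (hR : 0 ≤ R) (hL : 0 < L)
    (hN : ∀ g h : G, N (g * h) ≤ N g + N h)
    (hquasi : ∀ f g : G, |r (f * g) - r f - r g| ≤ R)
    (hhom : ∀ (g : G) (m : ℤ), r (g ^ m) = m * r g)
    (hS : ∀ s ∈ S, r s = 0)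
    (hLip : ∀ g : G, |r g| ≤ L * N g)
    (φ : G) (n : ℕ) (s t : G) (hs : s ∈ S) (ht : t ∈ S) :
    N (s * φ ^ n * t) ≥ (n * |r φ| - 2 * R) / L := by
  have hpow : r (φ ^ n) = n * r φ := by
    have := hhom φ (n : ℤ)
    simpa using this
  have h1 := hquasi (s * φ ^ n) t
  have h2 := hquasi s (φ ^ n)
  rw [hS t ht] at h1
  rw [hS s hs, hpow] at h2
  have key : (n : ℝ) * |r φ| - 2 * R ≤ |r (s * φ ^ n * t)| := by
    have habs : |(n : ℝ) * r φ| = n * |r φ| := by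
      rw [abs_mul, Nat.abs_cast]
    calc (n : ℝ) * |r φ| - 2 * R = |(n : ℝ) * r φ| - 2 * R := by rw [habs]
      _ ≤ |r (s * φ ^ n * t)| := by
          have a1 := abs_sub_abs_le_abs_sub ((n : ℝ) * r φ) (r (s * φ ^ n * t))
          have a2 : |r (s * φ ^ n * t) - (n : ℝ) * r φ| ≤ 2 * R := by
            have : r (s * φ ^ n * t) - (n : ℝ) * r φ =
                (r (s * φ ^ n * t) - r (s * φ ^ n) - 0) +
                (r (s * φ ^ n) - 0 - (n : ℝ) * r φ) := by ring
            rw [this]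
            calc _ ≤ |r (s * φ ^ n * t) - r (s * φ ^ n) - 0| +
                |r (s * φ ^ n) - 0 - (n : ℝ) * r φ| := abs_add_le _ _
              _ ≤ R + R := add_le_add h1 h2
              _ = 2 * R := by ring
          linarith [abs_sub_comm ((n : ℝ) * r φ) (r (s * φ ^ n * t))]
  rw [ge_iff_le, div_le_iff₀ hL]
  calc (n : ℝ) * |r φ| - 2 * R ≤ |r (s * φ ^ n * t)| := key
    _ ≤ L * N (s * φ ^ n * t) := hLip _
    _ = N (s * φ ^ n * t) * L := mul_comm _ _
end

section
/- Let $G$ be a group, $N : G \to \mathbb{R}$ a subadditive function ($N(gh) \le N(g) + N(h)$), $S \le G$ a subgroup, and $r : G \to \mathbb{R}$ a homogeneous quasimorphism with defect $R$ ($|r(fg) - r(f) - r(g)| \le R$ for all $f, g$, and $r(g^m) = m \cdot r(g)$ for all $g \in G$, $m \in \mathbb{Z}$) such that $r$ vanishes on $S$ and $|r(g)| \le L \cdot N(g)$ for all $g \in G$, where $L > 0$. If there exists $\varphi \in G$ with $r(\varphi) \ne 0$, then the function on double cosets $S g S \mapsto \inf_{s, t \in S} N(s g t)$ is unbounded: for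 every $M \in \mathbb{R}$ there exists $n \in \mathbb{N}$ such that $N(s \varphi^n t) > M$ for all $s, t \in S$. -/
/-- If a homogeneous quasimorphism vanishing on a subgroup `S`, Lipschitz with respect to
a subadditive `N`, does not vanish at some `φ`, then `N` is unbounded on the double cosets
of the powers of `φ`. -/
theorem double_coset_unbounded_of_quasimorphism
    {G : Type*} [Group G] (N r : G → ℝ) (S : Subgroup G) (R L : ℝ)
    (hR : 0 ≤ R) (hL : 0 < L)
    (hN : ∀ g h : G, N (g * h) ≤ N g + N h)
    (hquasi : ∀ f g : G, |r (f * g) - r f - r g| ≤ R)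
    (hhom : ∀ (g : G) (m : ℤ), r (g ^ m) = m * r g)
    (hS : ∀ s ∈ S, r s = 0)
    (hLip : ∀ g : G, |r g| ≤ L * N g)
    (φ : G) (hφ : r φ ≠ 0) :
    ∀ M : ℝ, ∃ n : ℕ, ∀ s ∈ S, ∀ t ∈ S, N (s * φ ^ n * t) > M := by
  intro M
  have hrφ : 0 < |r φ| := abs_pos.mpr hφ
  obtain ⟨n, hn⟩ := exists_nat_gt ((L * M + 2 * R) / |r φ|)
  refine ⟨n, fun s hs t ht => ?_⟩
  have h1 : |r (s * φ ^ n * t) - r (s * φ ^ n) - r t| ≤ R := hquasi _ _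
  have h2 : |r (s * φ ^ n) - r s - r (φ ^ n)| ≤ R := hquasi _ _
  have hrn : r (φ ^ n) = n * r φ := by
    have := hhom φ n
    rwa [zpow_natCast, Int.cast_natCast] at this
  have hrs : r s = 0 := hS s hs
  have hrt : r t = 0 := hS t ht
  rw [hrt] at h1
  rw [hrs, hrn] at h2
  have key : (n : ℝ) * |r φ| - 2 * R ≤ |r (s * φ ^ n * t)| := by
    have habs : |((n : ℝ)) * r φ| = n * |r φ| := by
      rw [abs_mul, abs_of_nonneg (by positivity : (0:ℝ) ≤ (n:ℝ))]
    have h3 : |r (s * φ ^ n * t) - n * r φ| ≤ 2 * R := by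
      have := abs_sub_abs_le_abs_sub (r (s * φ ^ n * t) - (n:ℝ) * r φ) 0
      calc |r (s * φ ^ n * t) - (n:ℝ) * r φ|
          = |(r (s * φ ^ n * t) - r (s * φ ^ n) - 0)
              + (r (s * φ ^ n) - 0 - (n:ℝ) * r φ)| := by ring_nf
        _ ≤ _ + _ := abs_add_le _ _
        _ ≤ R + R := add_le_add h1 h2
        _ = 2 * R := by ring
    have := abs_sub_abs_le_abs_sub ((n:ℝ) * r φ) (r (s * φ ^ n * t))
    rw [abs_sub_comm] at this
    linarith [this.trans h3, habs.symm.le]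
  have hLN := hLip (s * φ ^ n * t)
  have hn' : L * M + 2 * R < (n : ℝ) * |r φ| := by
    rwa [div_lt_iff₀ hrφ] at hn
  have : L * M < L * N (s * φ ^ n * t) := by linarith
  exact lt_of_mul_lt_mul_left this hL.le
end
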